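/- arXiv:1312.6161 — 9 statements merged into one kernel-verified Lean document; each statement's English description precedes it below -/
import Mathlib

section
/- Let E be a complex Hilbert space with unitary involution θ and θ-positive closed subspace E₊. Then E₀ := {v ∈ E₊ : θv = v} equals E₊ ∩ θ(E₊). -/
local notation "⟪" x ", " y "⟫" => @inner ℂ _ _ x y

/-- For a reflection positive Hilbert space `(E, E₊, θ)`, the space
`E₀ = {v ∈ E₊ : θv = v}` equals `E₊ ∩ θ(E₊)`. -/
theorem statement1
    {E : Type*} [NormedAddCommGroup E] [InnerProductSpace ℂ E] [CompleteSpace E]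
    (θ : E ≃ₗᵢ[ℂ] E) (hθinv : ∀ v : E, θ (θ v) = v)
    (Eplus : Submodule ℂ E) (hclosed : IsClosed (Eplus : Set E))
    (hpos : ∀ v ∈ Eplus, ∃ r : ℝ, 0 ≤ r ∧ ⟪θ v, v⟫ = (r : ℂ)) :
    {v : E | v ∈ Eplus ∧ θ v = v} = (Eplus : Set E) ∩ (θ '' (Eplus : Set E)) := by
  ext v
  constructor
  · rintro ⟨hv, hfix⟩
    exact ⟨hv, v, hv, hfix⟩
  · rintro ⟨hv, w, hw, rfl⟩
    have hθw : θ (θ w) ∈ Eplus := by rw [hθinv]; exact hw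
    refine ⟨hv, ?_⟩
    rw [hθinv]
    -- let u = θ w - w ∈ Eplus, then θ u = -u
    have hu : θ w - w ∈ Eplus := Eplus.sub_mem hv hw
    obtain ⟨r, hr0, hr⟩ := hpos _ hu
    have hθu : θ (θ w - w) = -(θ w - w) := by
      simp [map_sub, hθinv w, neg_sub]
    rw [hθu] at hr
    have : (-(‖θ w - w‖ ^ 2 : ℝ) : ℂ) = (r : ℂ) := by
      rw [← hr, inner_neg_left, inner_self_eq_norm_sq_to_K]
      norm_cast
    have hre : -(‖θ w - w‖ ^ 2 : ℝ) = r := by exact_mod_cast this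
    have hnorm : ‖θ w - w‖ ^ 2 = 0 := by nlinarith [sq_nonneg ‖θ w - w‖]
    have : θ w - w = 0 := by
      rwa [pow_eq_zero_iff (by norm_num), norm_eq_zero] at hnorm
    rw [sub_eq_zero] at this
    exact this.symm
end

section
/- Let (E, E₊, θ) be a reflection positive Hilbert space and T : E₊ → E₊ a bounded linear operator satisfying ⟨θTv, w⟩ = ⟨θv, Tw⟩ for all v, w ∈ E₊. Then T maps the null space N = {v ∈ E₊ : ⟨θv,v⟩ = 0} into itself, and the induced operator T̂ on the Hilbert completion Ê of E₊/N (with inner product ⟨v̂,ŵ⟩ = ⟨θv,w⟩) is a bounded symmetric operator with ‖T̂‖ ≤ ‖T‖. -/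
local notation "⟪" x ", " y "⟫" => @inner ℂ _ _ x y

/-!
Put `aₙ = ⟨θ Tⁿv, Tⁿv⟩`. Symmetry of `T` gives `aₙ₊₁ = ⟨θ Tⁿv, Tⁿ⁺²v⟩`, so the Cauchy–Schwarz
inequality for the positive semidefinite form `⟨θ ·, ·⟩` on `E₊` makes the sequence log-convex:
`aₙ₊₁² ≤ aₙ aₙ₊₂`. For `n = 0` this already shows that `a₀ = 0` forces `a₁ = 0`. In general it
gives `a₁ⁿ a₀ ≤ a₀ⁿ aₙ ≤ a₀ⁿ ‖T‖²ⁿ ‖v‖²`, and comparing growth rates as `n → ∞` yields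
`a₁ ≤ ‖T‖² a₀`.
-/

section LogConvex

variable {R : Type*} [Field R] [LinearOrder R] [IsStrictOrderedRing R]

theorem le_of_forall_pow_le_mul_pow [Archimedean R] {x y K : R} (hy : 0 ≤ y)
    (h : ∀ n : ℕ, x ^ n ≤ K * y ^ n) : x ≤ y := by
  by_contra! hxy
  rcases hy.eq_or_lt with rfl | hy
  · exact hxy.not_ge (by simpa using h 1)
  obtain ⟨n, hn⟩ := pow_unbounded_of_one_lt K ((one_lt_div hy).2 hxy)
  rw [div_pow, lt_div_iff₀ (pow_pos hy n)] at hn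
  exact (h n).not_gt hn

variable {a : ℕ → R} (ha : ∀ n, 0 ≤ a n) (hconv : ∀ n, a (n + 1) ^ 2 ≤ a n * a (n + 2))
include ha hconv

theorem mul_le_mul_succ_of_sq_succ_le (n : ℕ) : a 1 * a n ≤ a 0 * a (n + 1) := by
  induction n with
  | zero => rw [mul_comm]
  | succ n ih =>
    rcases (ha n).eq_or_lt with hn | hn
    · have : a (n + 1) = 0 := by nlinarith [hconv n, ha (n + 2)]
      rw [this, mul_zero]
      exact mul_nonneg (ha 0) (ha _)
    · refine le_of_mul_le_mul_left ?_ hn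
      calc a n * (a 1 * a (n + 1)) = (a 1 * a n) * a (n + 1) := by ring
        _ ≤ (a 0 * a (n + 1)) * a (n + 1) := mul_le_mul_of_nonneg_right ih (ha _)
        _ = a 0 * a (n + 1) ^ 2 := by ring
        _ ≤ a 0 * (a n * a (n + 2)) := mul_le_mul_of_nonneg_left (hconv n) (ha 0)
        _ = a n * (a 0 * a (n + 1 + 1)) := by ring

theorem pow_mul_le_pow_mul_of_sq_succ_le (n : ℕ) : a 1 ^ n * a 0 ≤ a 0 ^ n * a n := by
  induction n with
  | zero => simp
  | succ n ih =>
    calc a 1 ^ (n + 1) * a 0 = a 1 * (a 1 ^ n * a 0) := by ring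
      _ ≤ a 1 * (a 0 ^ n * a n) := mul_le_mul_of_nonneg_left ih (ha 1)
      _ = a 0 ^ n * (a 1 * a n) := by ring
      _ ≤ a 0 ^ n * (a 0 * a (n + 1)) :=
          mul_le_mul_of_nonneg_left (mul_le_mul_succ_of_sq_succ_le ha hconv n) (pow_nonneg (ha 0) n)
      _ = a 0 ^ (n + 1) * a (n + 1) := by ring

theorem le_mul_of_sq_succ_le_of_le_mul_pow [Archimedean R] {C r : R} (hr : 0 ≤ r)
    (hgrowth : ∀ n, a n ≤ C * r ^ n) : a 1 ≤ r * a 0 := by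
  rcases (ha 0).eq_or_lt with h0 | h0
  · have : a 1 = 0 := by nlinarith [hconv 0, ha 2]
    rw [this, ← h0, mul_zero]
  refine le_of_forall_pow_le_mul_pow (K := C / a 0) (mul_nonneg hr h0.le) fun n => ?_
  rw [div_mul_eq_mul_div, le_div_iff₀ h0]
  calc a 1 ^ n * a 0 ≤ a 0 ^ n * a n := pow_mul_le_pow_mul_of_sq_succ_le ha hconv n
    _ ≤ a 0 ^ n * (C * r ^ n) := mul_le_mul_of_nonneg_left (hgrowth n) (pow_nonneg (ha 0) n)
    _ = C * (r * a 0) ^ n := by ring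

end LogConvex

namespace PreInnerProductSpace.Core

variable {𝕜 F : Type*} [RCLike 𝕜] [AddCommGroup F] [Module 𝕜 F]
  (c : PreInnerProductSpace.Core 𝕜 F)

open RCLike

theorem norm_inner_sq_le (x y : F) :
    ‖c.inner x y‖ ^ 2 ≤ re (c.inner x x) * re (c.inner y y) := by
  have h := @InnerProductSpace.Core.inner_mul_inner_self_le _ _ _ _ _ c x y
  rwa [InnerProductSpace.Core.norm_inner_symm (c := c) y x, ← sq] at h

variable {T : F → F} (hT : ∀ x y, c.inner (T x) y = c.inner x (T y))
include hT

theorem re_inner_iterate_succ_sq_le (v : F) (n : ℕ) :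
    re (c.inner (T^[n + 1] v) (T^[n + 1] v)) ^ 2 ≤
      re (c.inner (T^[n] v) (T^[n] v)) * re (c.inner (T^[n + 2] v) (T^[n + 2] v)) := by
  have h : c.inner (T^[n + 1] v) (T^[n + 1] v) = c.inner (T^[n] v) (T^[n + 2] v) := by
    simp only [Function.iterate_succ_apply', hT]
  calc re (c.inner (T^[n + 1] v) (T^[n + 1] v)) ^ 2
      ≤ ‖c.inner (T^[n + 1] v) (T^[n + 1] v)‖ ^ 2 :=
        pow_le_pow_left₀ (c.re_inner_nonneg _) (re_le_norm _) 2
    _ ≤ _ := h ▸ c.norm_inner_sq_le _ _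

theorem inner_apply_self_eq_zero {v : F} (hv : c.inner v v = 0) : c.inner (T v) (T v) = 0 := by
  have h := c.re_inner_iterate_succ_sq_le hT v 0
  simp only [zero_add, Function.iterate_zero_apply, Function.iterate_one, hv, map_zero,
    zero_mul] at h
  rw [← InnerProductSpace.Core.inner_self_ofReal_re (c := c),
    pow_eq_zero_iff two_ne_zero |>.1 (le_antisymm h (sq_nonneg _)), ofReal_zero]

theorem re_inner_apply_self_le {v : F} {C r : ℝ} (hr : 0 ≤ r)
    (hgrowth : ∀ n, re (c.inner (T^[n] v) (T^[n] v)) ≤ C * r ^ n) :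
    re (c.inner (T v) (T v)) ≤ r * re (c.inner v v) :=
  le_mul_of_sq_succ_le_of_le_mul_pow (fun _ => c.re_inner_nonneg _)
    (c.re_inner_iterate_succ_sq_le hT v) hr hgrowth

end PreInnerProductSpace.Core

abbrev reflectionCore {𝕜 E : Type*} [RCLike 𝕜] [SeminormedAddCommGroup E] [InnerProductSpace 𝕜 E]
    (θ : E ≃ₗᵢ[𝕜] E) (hθ : ∀ v, θ (θ v) = v) (Eplus : Submodule 𝕜 E)
    (hpos : ∀ v ∈ Eplus, 0 ≤ RCLike.re (inner 𝕜 (θ v) v)) :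
    PreInnerProductSpace.Core 𝕜 Eplus where
  inner x y := inner 𝕜 (θ x) y
  conj_inner_symm x y := by rw [inner_conj_symm, ← θ.inner_map_map, hθ]
  re_inner_nonneg x := hpos x x.2
  add_left x y z := by simp only [Submodule.coe_add, map_add, inner_add_left]
  smul_left x y r := by simp only [Submodule.coe_smul, map_smul, inner_smul_left]

theorem ContinuousLinearMap.norm_iterate_apply_le {𝕜 F : Type*} [NontriviallyNormedField 𝕜]
    [SeminormedAddCommGroup F] [NormedSpace 𝕜 F] (T : F →L[𝕜] F) (n : ℕ) (x : F) :
    ‖T^[n] x‖ ≤ ‖T‖ ^ n * ‖x‖ := by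
  simpa using (T.lipschitz.iterate n).norm_le_mul (iterate_map_zero T n) x

theorem statement2_general
    {E : Type*} [NormedAddCommGroup E] [InnerProductSpace ℂ E]
    (θ : E ≃ₗᵢ[ℂ] E) (hθinv : ∀ v : E, θ (θ v) = v)
    (Eplus : Submodule ℂ E)
    (hpos : ∀ v ∈ Eplus, ∃ r : ℝ, 0 ≤ r ∧ ⟪θ v, v⟫ = (r : ℂ))
    (T : Eplus →L[ℂ] Eplus)
    (hsym : ∀ v w : Eplus, ⟪θ ((T v : E)), (w : E)⟫ = ⟪θ (v : E), ((T w : E))⟫) :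
    (∀ v : Eplus, ⟪θ (v : E), (v : E)⟫ = (0 : ℂ) →
        ⟪θ ((T v : E)), ((T v : E))⟫ = (0 : ℂ)) ∧
    (∀ v w : Eplus, ⟪θ ((T v : E)), (w : E)⟫ = ⟪θ (v : E), ((T w : E))⟫) ∧
    (∀ v : Eplus,
        (⟪θ ((T v : E)), ((T v : E))⟫).re ≤ ‖T‖ ^ 2 * (⟪θ (v : E), (v : E)⟫).re) := by
  have hpos' : ∀ v ∈ Eplus, 0 ≤ (⟪θ v, v⟫).re := fun v hv => by
    obtain ⟨r, hr, h⟩ := hpos v hv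
    simpa [h]
  let c := reflectionCore θ hθinv Eplus hpos'
  refine ⟨fun v hv => c.inner_apply_self_eq_zero hsym hv, hsym, fun v => ?_⟩
  refine c.re_inner_apply_self_le hsym (C := ‖v‖ ^ 2) (sq_nonneg ‖T‖) fun n => ?_
  calc RCLike.re ⟪θ (T^[n] v : E), (T^[n] v : E)⟫ ≤ ‖θ (T^[n] v : E)‖ * ‖(T^[n] v : E)‖ :=
        re_inner_le_norm _ _
    _ = ‖T^[n] v‖ ^ 2 := by rw [θ.norm_map, sq]; rfl
    _ ≤ (‖T‖ ^ n * ‖v‖) ^ 2 := pow_le_pow_left₀ (norm_nonneg _) (T.norm_iterate_apply_le n v) 2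
    _ = ‖v‖ ^ 2 * (‖T‖ ^ 2) ^ n := by ring

/-- Let `(E, E₊, θ)` be a reflection positive Hilbert space and `T : E₊ → E₊` a bounded
linear operator with `⟨θTv, w⟩ = ⟨θv, Tw⟩` for `v, w ∈ E₊`.  Then `T` maps the null space
`N = {v ∈ E₊ : ⟨θv,v⟩ = 0}` into itself, and the induced operator `T̂` on `Ê` is a bounded
symmetric operator with `‖T̂‖ ≤ ‖T‖` (expressed here as: `‖T̂ q(v)‖² = re⟨θTv,Tv⟩ ≤
‖T‖² · re⟨θv,v⟩ = ‖T‖² ‖q(v)‖²`, together with the symmetry relation on the quotient). -/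
theorem statement2
    {E : Type*} [NormedAddCommGroup E] [InnerProductSpace ℂ E] [CompleteSpace E]
    (θ : E ≃ₗᵢ[ℂ] E) (hθinv : ∀ v : E, θ (θ v) = v)
    (Eplus : Submodule ℂ E) (hclosed : IsClosed (Eplus : Set E))
    (hpos : ∀ v ∈ Eplus, ∃ r : ℝ, 0 ≤ r ∧ ⟪θ v, v⟫ = (r : ℂ))
    (T : Eplus →L[ℂ] Eplus)
    (hsym : ∀ v w : Eplus, ⟪θ ((T v : E)), (w : E)⟫ = ⟪θ (v : E), ((T w : E))⟫) :
    (∀ v : Eplus, ⟪θ (v : E), (v : E)⟫ = (0 : ℂ) →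
        ⟪θ ((T v : E)), ((T v : E))⟫ = (0 : ℂ)) ∧
    (∀ v w : Eplus, ⟪θ ((T v : E)), (w : E)⟫ = ⟪θ (v : E), ((T w : E))⟫) ∧
    (∀ v : Eplus,
        (⟪θ ((T v : E)), ((T v : E))⟫).re ≤ ‖T‖ ^ 2 * (⟪θ (v : E), (v : E)⟫).re) :=
  statement2_general θ hθinv Eplus hpos T hsym
end

section
/- Let (E, E₊, θ) be a reflection positive Hilbert space and U a unitary operator on E with UE₊ = E₊ and θUθ = U⁻¹. Then the induced operator Û on Ê satisfies Û² = id. -/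
local notation "⟪" x ", " y "⟫" => @inner ℂ _ _ x y

/-! For `v ∈ E₊` put `aₙ = re ⟪θ (Uⁿ v), Uⁿ v⟫`. Since `U` is symmetric for the form `⟪θ ·, ·⟫`,
`aₙ + aₙ₊₂ - 2 aₙ₊₁ = ⟪θ (U² w - w), U² w - w⟫ ≥ 0` with `w = Uⁿ v ∈ E₊`, so `(aₙ)` is a convex
sequence on `ℤ`; it is bounded by `‖v‖²` because `θ` and `U` are isometries. A convex sequence on
`ℤ` that is bounded above is constant, so the second difference at `0`, which is the quantity in
question, vanishes. -/

namespace Int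

lemma antitone_of_convex_of_bddAbove {a : ℤ → ℝ} {M : ℝ}
    (hconv : ∀ n, 2 * a (n + 1) ≤ a n + a (n + 2)) (hbdd : ∀ n, a n ≤ M) : Antitone a := by
  have hdiff : Monotone fun n => a (n + 1) - a n :=
    monotone_int_of_le_succ fun n => by
      have := hconv n
      rw [add_assoc, one_add_one_eq_two]
      linarith
  refine antitone_int_of_succ_le fun n => not_lt.mp fun hlt => ?_
  set d := a (n + 1) - a n
  have hd : 0 < d := sub_pos.mpr hlt
  have hgrowth : ∀ k : ℕ, a n + k * d ≤ a (n + k) := by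
    intro k
    induction k with
    | zero => simp
    | succ k ih =>
      have hstep : d ≤ a (n + k + 1) - a (n + k) := hdiff (by omega)
      push_cast
      rw [← add_assoc]
      linarith
  obtain ⟨k, hk⟩ := exists_nat_gt ((M - a n) / d)
  have := (div_lt_iff₀ hd).mp hk
  linarith [hgrowth k, hbdd (n + k)]

lemma eq_of_convex_of_bddAbove {a : ℤ → ℝ} {M : ℝ}
    (hconv : ∀ n, 2 * a (n + 1) ≤ a n + a (n + 2)) (hbdd : ∀ n, a n ≤ M) (m n : ℤ) :
    a m = a n := by
  have hanti := antitone_of_convex_of_bddAbove hconv hbdd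
  have hanti_neg : Antitone fun n => a (-n) :=
    antitone_of_convex_of_bddAbove (fun n => by
      have := hconv (-n - 2)
      ring_nf at this ⊢
      linarith) fun n => hbdd (-n)
  rcases le_total m n with h | h
  · exact le_antisymm (by simpa using hanti_neg (neg_le_neg h)) (hanti h)
  · exact le_antisymm (hanti h) (by simpa using hanti_neg (neg_le_neg h))

end Int

lemma LinearIsometryEquiv.zpow_apply_mem {R E : Type*} [Semiring R] [SeminormedAddCommGroup E]
    [Module R E] {U : E ≃ₗᵢ[R] E} {S : Set E} (hU : U '' S = S)
    {v : E} (hv : v ∈ S) (n : ℤ) : (U ^ n) v ∈ S := by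
  induction n using Int.induction_on with
  | zero => simpa
  | succ n ih =>
    rw [add_comm, zpow_one_add, coe_mul, Function.comp_apply, ← hU]
    exact Set.mem_image_of_mem U ih
  | pred n ih =>
    rw [sub_eq_neg_add, zpow_add, zpow_neg_one, coe_mul, Function.comp_apply, coe_inv]
    rw [← hU] at ih
    obtain ⟨y, hy, hyx⟩ := ih
    rwa [← hyx, symm_apply_apply]

section

variable {E : Type*} [SeminormedAddCommGroup E] [InnerProductSpace ℂ E]

lemma inner_reflection_map_eq_inner_map {θ U : E ≃ₗᵢ[ℂ] E} (hθ : ∀ v, θ (θ v) = v)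
    (hUθ : ∀ v, θ (U (θ v)) = U.symm v) (x y : E) : ⟪θ (U x), y⟫ = ⟪θ x, U y⟫ := by
  conv_lhs => rw [← hθ x, hUθ]
  rw [LinearIsometryEquiv.inner_map_eq_flip, LinearIsometryEquiv.symm_symm]

lemma inner_sub_map_map_self {F : Type*} [FunLike F E E] [AddMonoidHomClass F E E]
    {θ : F} {U : E → E} (hsymm : ∀ x y, ⟪θ (U x), y⟫ = ⟪θ x, U y⟫)
    (x : E) :
    ⟪θ (U (U x) - x), U (U x) - x⟫ =
      ⟪θ x, x⟫ + ⟪θ (U (U x)), U (U x)⟫ - 2 * ⟪θ (U x), U x⟫ := by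
  rw [map_sub, inner_sub_left, inner_sub_right, inner_sub_right, hsymm (U x) x, ← hsymm x (U x)]
  ring

end

theorem statement3_general
    {E : Type*} [NormedAddCommGroup E] [InnerProductSpace ℂ E]
    (θ : E ≃ₗᵢ[ℂ] E) (hθinv : ∀ v : E, θ (θ v) = v)
    (Eplus : Submodule ℂ E)
    (hpos : ∀ v ∈ Eplus, ∃ r : ℝ, 0 ≤ r ∧ ⟪θ v, v⟫ = (r : ℂ))
    (U : E ≃ₗᵢ[ℂ] E) (hUE : U '' (Eplus : Set E) = (Eplus : Set E))
    (hUθ : ∀ v : E, θ (U (θ v)) = U.symm v) :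
    ∀ v ∈ Eplus, ⟪θ (U (U v) - v), U (U v) - v⟫ = (0 : ℂ) := by
  intro v hv
  have hsecond := inner_sub_map_map_self (θ := θ) (U := U)
    (inner_reflection_map_eq_inner_map hθinv hUθ)
  have hsucc (n : ℤ) : (U ^ (n + 1)) v = U ((U ^ n) v) := by rw [add_comm, zpow_one_add]; rfl
  set a : ℤ → ℝ := fun n => (⟪θ ((U ^ n) v), (U ^ n) v⟫).re
  have hdiff (n : ℤ) : ∃ r : ℝ, 0 ≤ r ∧
      ⟪θ (U (U ((U ^ n) v)) - (U ^ n) v), U (U ((U ^ n) v)) - (U ^ n) v⟫ = r ∧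
      r = a n + a (n + 2) - 2 * a (n + 1) := by
    have hmem := U.zpow_apply_mem hUE hv n
    have hmem₂ : U (U ((U ^ n) v)) ∈ Eplus := U.zpow_apply_mem hUE hmem 2
    obtain ⟨r, hr, hθr⟩ := hpos _ (sub_mem hmem₂ hmem)
    refine ⟨r, hr, hθr, ?_⟩
    have := congrArg RCLike.re (hsecond ((U ^ n) v))
    rw [hθr, ← hsucc, ← hsucc, add_assoc, one_add_one_eq_two] at this
    simpa only [map_sub, map_add, RCLike.ofNat_mul_re, RCLike.re_to_complex,
      Complex.ofReal_re] using this
  have hconv (n : ℤ) : 2 * a (n + 1) ≤ a n + a (n + 2) := by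
    obtain ⟨r, hr, -, rfl⟩ := hdiff n
    linarith
  have hbdd (n : ℤ) : a n ≤ ‖v‖ * ‖v‖ := by
    simpa using re_inner_le_norm (𝕜 := ℂ) (θ ((U ^ n) v)) ((U ^ n) v)
  have hconst := Int.eq_of_convex_of_bddAbove hconv hbdd
  obtain ⟨r, -, hθr, rfl⟩ := hdiff 0
  simp only [zpow_zero, LinearIsometryEquiv.coe_one, id_eq] at hθr
  rw [hθr, zero_add, zero_add, hconst 0 1, hconst 2 1]
  push_cast
  ring

/-- Let `(E, E₊, θ)` be a reflection positive Hilbert space and `U` unitary on `E` with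
`U E₊ = E₊` and `θUθ = U⁻¹`.  Then the induced operator `Û` on `Ê` satisfies `Û² = id`,
i.e. `q(U(Uv)) = q(v)` for all `v ∈ E₊`, expressed via the null condition
`⟨θ(U²v − v), U²v − v⟩ = 0`. -/
theorem statement3
    {E : Type*} [NormedAddCommGroup E] [InnerProductSpace ℂ E] [CompleteSpace E]
    (θ : E ≃ₗᵢ[ℂ] E) (hθinv : ∀ v : E, θ (θ v) = v)
    (Eplus : Submodule ℂ E) (hclosed : IsClosed (Eplus : Set E))
    (hpos : ∀ v ∈ Eplus, ∃ r : ℝ, 0 ≤ r ∧ ⟪θ v, v⟫ = (r : ℂ))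
    (U : E ≃ₗᵢ[ℂ] E) (hUE : U '' (Eplus : Set E) = (Eplus : Set E))
    (hUθ : ∀ v : E, θ (U (θ v)) = U.symm v) :
    ∀ v ∈ Eplus, ⟪θ (U (U v) - v), U (U v) - v⟫ = (0 : ℂ) :=
  statement3_general θ hθinv Eplus hpos U hUE hUθ
end

section
/- Let (Uₜ)ₜ∈ℝ be a strongly continuous unitary one-parameter group on a Hilbert space E and E₊ a closed subspace with UₜE₊ ⊆ E₊ for all t > 0. Then the following are equivalent: (i) the union of the subspaces UₜE₊ over t < 0 spans a dense subspace of E; (ii) there exists a dense subspace D ⊆ E such that for every v ∈ D there is T with Uₜv ∈ E₊ for all t ≥ T; (iii) the smallest closed U-invariant subspace containing E₊ is E. -/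
/-- Let `(Uₜ)ₜ∈ℝ` be a strongly continuous unitary one-parameter group on a Hilbert space
`E` and `E₊` a closed subspace with `Uₜ E₊ ⊆ E₊` for all `t > 0`.  Then the following are
equivalent: (i) the union of the `Uₜ E₊`, `t < 0`, spans a dense subspace of `E`;
(ii) there is a dense subspace `D ⊆ E` such that for every `v ∈ D` one has `Uₜ v ∈ E₊` for
all sufficiently large `t`; (iii) `E₊` is `U`-cyclic, i.e. the smallest closed `U`-invariant
subspace containing `E₊` is `E`. -/
theorem statement4
    {E : Type*} [NormedAddCommGroup E] [InnerProductSpace ℂ E] [CompleteSpace E]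
    (U : ℝ → (E ≃ₗᵢ[ℂ] E))
    (hgrp : ∀ s t : ℝ, ∀ v : E, U (s + t) v = U s (U t v))
    (hU0 : ∀ v : E, U 0 v = v)
    (hcont : ∀ v : E, Continuous fun t : ℝ => U t v)
    (Eplus : Submodule ℂ E) (hclosed : IsClosed (Eplus : Set E))
    (hinv : ∀ t : ℝ, 0 < t → ∀ v ∈ Eplus, U t v ∈ Eplus) :
    (Dense (Submodule.span ℂ (⋃ t ∈ Set.Iio (0 : ℝ), U t '' (Eplus : Set E)) : Set E) ↔
      Dense (Submodule.span ℂ (⋃ t : ℝ, U t '' (Eplus : Set E)) : Set E)) ∧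
    ((∃ D : Submodule ℂ E, Dense (D : Set E) ∧
        ∀ v ∈ D, ∃ T : ℝ, ∀ t : ℝ, T ≤ t → U t v ∈ Eplus) ↔
      Dense (Submodule.span ℂ (⋃ t : ℝ, U t '' (Eplus : Set E)) : Set E)) := by
  have hmono : ∀ s t : ℝ, t ≤ s → (U s '' (Eplus : Set E)) ⊆ U t '' (Eplus : Set E) := by
    rintro s t hts x ⟨w, hw, rfl⟩
    rcases eq_or_lt_of_le hts with h | h
    · exact ⟨w, hw, by rw [h]⟩
    · refine ⟨U (s - t) w, hinv _ (by linarith) w hw, ?_⟩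
      rw [← hgrp]
      norm_num
  have hsets : (⋃ t ∈ Set.Iio (0 : ℝ), U t '' (Eplus : Set E))
      = ⋃ t : ℝ, U t '' (Eplus : Set E) := by
    apply Set.Subset.antisymm
    · exact Set.iUnion₂_subset fun t _ => Set.subset_iUnion (fun t : ℝ => U t '' (Eplus : Set E)) t
    · refine Set.iUnion_subset fun t => ?_
      refine Set.subset_iUnion₂_of_subset (min t 0 - 1)
        (by have := min_le_right t 0; simp only [Set.mem_Iio]; linarith) ?_
      exact hmono t _ (by have := min_le_left t 0; linarith)
  constructor
  · rw [hsets]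
  constructor
  · rintro ⟨D, hD, hprop⟩
    apply hD.mono
    intro v hv
    obtain ⟨T, hT⟩ := hprop v hv
    apply Submodule.subset_span
    refine Set.mem_iUnion.2 ⟨-T, ⟨U T v, hT T le_rfl, ?_⟩⟩
    rw [← hgrp]
    simp [hU0]
  · intro hdense
    refine ⟨Submodule.span ℂ (⋃ t : ℝ, U t '' (Eplus : Set E)), hdense, ?_⟩
    intro v hv
    induction hv using Submodule.span_induction with
    | mem x hx =>
      obtain ⟨s, w, hw, rfl⟩ := Set.mem_iUnion.1 hx
      refine ⟨-s, fun t ht => ?_⟩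
      rw [← hgrp]
      rcases eq_or_lt_of_le (by linarith : (0:ℝ) ≤ t + s) with h | h
      · rw [← h, hU0]; exact hw
      · exact hinv _ h w hw
    | zero => exact ⟨0, fun t _ => by rw [map_zero]; exact Eplus.zero_mem⟩
    | add x y _ _ hx hy =>
      obtain ⟨T1, h1⟩ := hx
      obtain ⟨T2, h2⟩ := hy
      exact ⟨max T1 T2, fun t ht => by
        rw [map_add]
        exact Eplus.add_mem (h1 t (le_trans (le_max_left _ _) ht))
          (h2 t (le_trans (le_max_right _ _) ht))⟩
    | smul c x _ hx =>
      obtain ⟨T, hT⟩ := hx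
      exact ⟨T, fun t ht => by rw [map_smul]; exact Eplus.smul_mem c (hT t ht)⟩
end

section
/- Let (Uₜ)ₜ∈ℝ be a reflection positive strongly continuous unitary one-parameter group on (E, E₊, θ) such that E₊ is U-cyclic. Then the space E_fix of vectors fixed by all Uₜ is contained in E₀ = {v ∈ E₊ : θv = v}. -/
local notation "⟪" x ", " y "⟫" => @inner ℂ _ _ x y

/-!
By the mean ergodic theorem, the orthogonal projection `P` onto the fixed space of the contraction
`U₁` is the strong limit of the averages `N⁻¹ ∑_{n<N} U₁ⁿ`. These averages preserve the closed
subspace `E₊`, hence so does `P`; and `P ∘ U₁ = P`, so for every `t` we may shift `Uₜ E₊` by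
`U₁ⁿ` into `U_{t+n} E₊ ⊆ E₊` to see that `P` maps `Uₜ E₊` into `E₊`. By cyclicity `P` maps all of
`E` into `E₊`, and a `U`-fixed vector `v` satisfies `P v = v`, so `v ∈ E₊`. Since `θ v` is fixed
as well, `x = v - θ v ∈ E₊` with `θ x = -x`, and reflection positivity gives
`-‖x‖² = ⟪θ x, x⟫ ≥ 0`, so `θ v = v`.
-/

open Filter Function Set

theorem Submodule.birkhoffAverage_mem {R M : Type*} [DivisionSemiring R] [AddCommMonoid M]
    [Module R M] (S : Submodule R M) {f : M → M} (hf : MapsTo f S S) {x : M} (hx : x ∈ S)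
    (n : ℕ) : birkhoffAverage R f id n x ∈ S :=
  S.smul_mem _ <| S.sum_mem fun k _ ↦ hf.iterate k hx

theorem ContinuousLinearMap.mem_of_dense_span {𝕜 E F : Type*} [Semiring 𝕜]
    [TopologicalSpace E] [AddCommMonoid E] [Module 𝕜 E]
    [TopologicalSpace F] [AddCommMonoid F] [Module 𝕜 F]
    (Q : E →L[𝕜] F) {s : Set E} (hs : Dense (Submodule.span 𝕜 s : Set E))
    {S : Submodule 𝕜 F} (hS : IsClosed (S : Set F)) (hQ : MapsTo Q s S) (x : E) : Q x ∈ S :=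
  have hspan : (Submodule.span 𝕜 s : Set E) ⊆ Q ⁻¹' S :=
    Submodule.span_le (p := S.comap (Q : E →ₗ[𝕜] F)).2 hQ
  closure_minimal hspan (hS.preimage Q.continuous) (hs.closure_eq ▸ mem_univ x)

namespace ContinuousLinearMap

variable {𝕜 E : Type*} [RCLike 𝕜] [NormedAddCommGroup E] [InnerProductSpace 𝕜 E]
  [CompleteSpace E] {f : E →L[𝕜] E}

theorem starProjection_eqLocus_one_mem (hf : ‖f‖ ≤ 1) {S : Submodule 𝕜 E}
    (hS : IsClosed (S : Set E)) (hfS : MapsTo f S S) {x : E} (hx : x ∈ S) :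
    (f.eqLocus (1 : E →L[𝕜] E)).starProjection x ∈ S :=
  hS.mem_of_tendsto (f.tendsto_birkhoffAverage_orthogonalProjection hf x)
    (Eventually.of_forall (S.birkhoffAverage_mem hfS hx))

theorem starProjection_eqLocus_one_apply_self (hf : ‖f‖ ≤ 1) (x : E) :
    (f.eqLocus (1 : E →L[𝕜] E)).starProjection (f x) =
      (f.eqLocus (1 : E →L[𝕜] E)).starProjection x := by
  have hbdd : Bornology.IsBounded (range fun n ↦ id (f^[n] x)) := by
    refine (Metric.isBounded_closedBall (x := (0 : E)) (r := ‖x‖)).subset ?_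
    rintro _ ⟨n, rfl⟩
    simpa using ((f.lipschitz.weaken (mod_cast hf : ‖f‖₊ ≤ 1)).iterate n).dist_le_mul x 0
  rw [← sub_eq_zero]
  exact tendsto_nhds_unique ((f.tendsto_birkhoffAverage_orthogonalProjection hf (f x)).sub
    (f.tendsto_birkhoffAverage_orthogonalProjection hf x))
    (tendsto_birkhoffAverage_apply_sub_birkhoffAverage 𝕜 hbdd)

theorem starProjection_eqLocus_one_apply_iterate (hf : ‖f‖ ≤ 1) (n : ℕ) (x : E) :
    (f.eqLocus (1 : E →L[𝕜] E)).starProjection (f^[n] x) =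
      (f.eqLocus (1 : E →L[𝕜] E)).starProjection x := by
  induction n generalizing x with
  | zero => rfl
  | succ n ih => rw [iterate_succ_apply, ih, starProjection_eqLocus_one_apply_self hf]

end ContinuousLinearMap

section OneParameterGroup

variable {𝕜 E : Type*} [RCLike 𝕜] [NormedAddCommGroup E] [InnerProductSpace 𝕜 E]
  {U : ℝ → E ≃ₗᵢ[𝕜] E}

theorem iterate_one_apply (hgrp : ∀ s t : ℝ, ∀ v : E, U (s + t) v = U s (U t v))
    (hU0 : ∀ v : E, U 0 v = v) (n : ℕ) (v : E) : (U 1 : E →L[𝕜] E)^[n] v = U n v := by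
  induction n with
  | zero => simpa using (hU0 v).symm
  | succ n ih =>
    rw [iterate_succ_apply', ih, Nat.cast_succ, add_comm, hgrp]
    rfl

variable [CompleteSpace E] {S : Submodule 𝕜 E}

theorem starProjection_eqLocus_one_apply_mem (hgrp : ∀ s t : ℝ, ∀ v : E, U (s + t) v = U s (U t v))
    (hU0 : ∀ v : E, U 0 v = v) (hS : IsClosed (S : Set E))
    (hUS : ∀ t : ℝ, 0 ≤ t → MapsTo (U t) S S) (t : ℝ) {w : E} (hw : w ∈ S) :
    ((U 1 : E →L[𝕜] E).eqLocus (1 : E →L[𝕜] E)).starProjection (U t w) ∈ S := by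
  have hU1 : ‖(U 1 : E →L[𝕜] E)‖ ≤ 1 := (U 1).toLinearIsometry.norm_toContinuousLinearMap_le
  obtain ⟨n, hn⟩ := exists_nat_ge (-t)
  rw [← ContinuousLinearMap.starProjection_eqLocus_one_apply_iterate hU1 n,
    iterate_one_apply hgrp hU0, ← hgrp]
  exact ContinuousLinearMap.starProjection_eqLocus_one_mem hU1 hS (hUS 1 zero_le_one)
    (hUS _ (by linarith) hw)

theorem mem_of_forall_apply_eq_self (hgrp : ∀ s t : ℝ, ∀ v : E, U (s + t) v = U s (U t v))
    (hU0 : ∀ v : E, U 0 v = v) (hS : IsClosed (S : Set E))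
    (hUS : ∀ t : ℝ, 0 ≤ t → MapsTo (U t) S S)
    (hcyc : Dense (Submodule.span 𝕜 (⋃ t : ℝ, U t '' (S : Set E)) : Set E))
    {v : E} (hv : ∀ t : ℝ, U t v = v) : v ∈ S := by
  have hPv : ((U 1 : E →L[𝕜] E).eqLocus (1 : E →L[𝕜] E)).starProjection v = v :=
    Submodule.starProjection_eq_self_iff.2 (hv 1)
  rw [← hPv]
  refine ContinuousLinearMap.mem_of_dense_span _ hcyc hS ?_ v
  rintro _ ⟨_, ⟨t, rfl⟩, w, hw, rfl⟩
  exact starProjection_eqLocus_one_apply_mem hgrp hU0 hS hUS t hw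

end OneParameterGroup

theorem eq_zero_of_inner_neg_self_eq_nonneg {𝕜 E : Type*} [RCLike 𝕜] [NormedAddCommGroup E]
    [InnerProductSpace 𝕜 E] {x : E} {r : ℝ} (hr : 0 ≤ r) (h : inner 𝕜 (-x) x = (r : 𝕜)) :
    x = 0 := by
  rw [inner_neg_left, inner_self_eq_norm_sq_to_K, ← RCLike.ofReal_pow, ← RCLike.ofReal_neg,
    RCLike.ofReal_inj] at h
  exact norm_eq_zero.1 (pow_eq_zero_iff two_ne_zero |>.1 (by nlinarith [sq_nonneg ‖x‖]))

theorem statement5_general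
    {E : Type*} [NormedAddCommGroup E] [InnerProductSpace ℂ E] [CompleteSpace E]
    (θ : E ≃ₗᵢ[ℂ] E) (hθinv : ∀ v : E, θ (θ v) = v)
    (Eplus : Submodule ℂ E) (hclosed : IsClosed (Eplus : Set E))
    (hpos : ∀ v ∈ Eplus, ∃ r : ℝ, 0 ≤ r ∧ ⟪θ v, v⟫ = (r : ℂ))
    (U : ℝ → (E ≃ₗᵢ[ℂ] E))
    (hgrp : ∀ s t : ℝ, ∀ v : E, U (s + t) v = U s (U t v))
    (hU0 : ∀ v : E, U 0 v = v)
    (hinvplus : ∀ t : ℝ, 0 ≤ t → ∀ v ∈ Eplus, U t v ∈ Eplus)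
    (hθU : ∀ t : ℝ, ∀ v : E, θ (U t (θ v)) = U (-t) v)
    (hcyc : Dense (Submodule.span ℂ (⋃ t : ℝ, U t '' (Eplus : Set E)) : Set E)) :
    ∀ v : E, (∀ t : ℝ, U t v = v) → v ∈ Eplus ∧ θ v = v := by
  intro v hv
  have hθv : ∀ t : ℝ, U t (θ v) = θ v := fun t ↦ by
    rw [← hθinv (U t (θ v)), hθU, hv]
  have hmem := fun {w} ↦ mem_of_forall_apply_eq_self hgrp hU0 hclosed hinvplus hcyc (v := w)
  obtain ⟨r, hr, hθx⟩ := hpos _ (Eplus.sub_mem (hmem hv) (hmem hθv))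
  rw [map_sub, hθinv, ← neg_sub] at hθx
  exact ⟨hmem hv, (sub_eq_zero.1 (eq_zero_of_inner_neg_self_eq_nonneg hr hθx)).symm⟩

/-- Let `(Uₜ)` be a reflection positive strongly continuous unitary one-parameter group on
`(E, E₊, θ)` such that `E₊` is `U`-cyclic.  Then the fixed space
`E_fix = {v : Uₜ v = v ∀ t}` is contained in `E₀ = {v ∈ E₊ : θ v = v}`. -/
theorem statement5
    {E : Type*} [NormedAddCommGroup E] [InnerProductSpace ℂ E] [CompleteSpace E]
    (θ : E ≃ₗᵢ[ℂ] E) (hθinv : ∀ v : E, θ (θ v) = v)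
    (Eplus : Submodule ℂ E) (hclosed : IsClosed (Eplus : Set E))
    (hpos : ∀ v ∈ Eplus, ∃ r : ℝ, 0 ≤ r ∧ ⟪θ v, v⟫ = (r : ℂ))
    (U : ℝ → (E ≃ₗᵢ[ℂ] E))
    (hgrp : ∀ s t : ℝ, ∀ v : E, U (s + t) v = U s (U t v))
    (hU0 : ∀ v : E, U 0 v = v)
    (hcont : ∀ v : E, Continuous fun t : ℝ => U t v)
    (hinvplus : ∀ t : ℝ, 0 ≤ t → ∀ v ∈ Eplus, U t v ∈ Eplus)
    (hθU : ∀ t : ℝ, ∀ v : E, θ (U t (θ v)) = U (-t) v)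
    (hcyc : Dense (Submodule.span ℂ (⋃ t : ℝ, U t '' (Eplus : Set E)) : Set E)) :
    ∀ v : E, (∀ t : ℝ, U t v = v) → v ∈ Eplus ∧ θ v = v :=
  statement5_general θ hθinv Eplus hclosed hpos U hgrp hU0 hinvplus hθU hcyc
end

section
/- Let (E, E₊, θ) be a reflection positive Hilbert space and D ⊆ E₀ = {v ∈ E₊ : θv = v} a subspace whose image q(D) is dense in Ê. Then q(E₀) = Ê and N = E₊ ∩ E₀^⊥, where N = {v ∈ E₊ : ⟨θv,v⟩ = 0}. -/
local notation "⟪" x ", " y "⟫" => @inner ℂ _ _ x y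

/-!
Write `B(x, y) = ⟪θ x, y⟫`; on `E₊` it is a positive semidefinite Hermitian form, and on
`E₀ = {v ∈ E₊ : θ v = v}` its seminorm is the norm of `E`.  Given `w ∈ E₊`, pick `dₙ ∈ D` with
`B(w - dₙ, w - dₙ) → 0`.  The parallelogram law bounds `‖dₘ - dₙ‖² = B(dₘ - dₙ, dₘ - dₙ)` by
`2 B(w - dₘ, w - dₘ) + 2 B(w - dₙ, w - dₙ)`, so `(dₙ)` is Cauchy in `E`; its limit `v` lies in the
closed set `E₀` and `B(w - v, w - v) = 0`.  The description of `N` then follows from the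
Cauchy–Schwarz inequality for `B`, which makes `N` the radical of `B` on `E₊`: conversely, if
`v ∈ E₊` is orthogonal to `E₀`, take `u ∈ E₀` with `v - u ∈ N`; then
`B(v, v) = B(v, v - u) + ⟪v, u⟫ = 0`.
-/

open Filter Topology ComplexConjugate

theorem cauchySeq_of_dist_sq_le_add {X : Type*} [PseudoMetricSpace X] {u : ℕ → X} {f : ℕ → ℝ}
    (hf : Tendsto f atTop (𝓝 0)) (h : ∀ m n, dist (u m) (u n) ^ 2 ≤ f m + f n) :
    CauchySeq u := by
  refine Metric.cauchySeq_iff.mpr fun ε hε => ?_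
  obtain ⟨N, hN⟩ := eventually_atTop.mp (hf.eventually (gt_mem_nhds (half_pos (pow_pos hε 2))))
  refine ⟨N, fun m hm n hn => lt_of_pow_lt_pow_left₀ 2 hε.le ?_⟩
  linarith [h m n, hN m hm, hN n hn]

section ReflectionForm

variable {E : Type*} [NormedAddCommGroup E] [InnerProductSpace ℂ E]

def IsReflectionPositive (θ : E ≃ₗᵢ[ℂ] E) (V : Submodule ℂ E) : Prop :=
  ∀ v ∈ V, ∃ r : ℝ, 0 ≤ r ∧ ⟪θ v, v⟫ = (r : ℂ)

variable {θ : E ≃ₗᵢ[ℂ] E} {V : Submodule ℂ E}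

theorem IsReflectionPositive.inner_map_self_eq_ofReal_re (hpos : IsReflectionPositive θ V)
    {v : E} (hv : v ∈ V) : ⟪θ v, v⟫ = ((⟪θ v, v⟫).re : ℂ) := by
  obtain ⟨r, -, h⟩ := hpos v hv
  rw [h, Complex.ofReal_re]

theorem IsReflectionPositive.re_inner_map_self_nonneg (hpos : IsReflectionPositive θ V)
    {v : E} (hv : v ∈ V) : 0 ≤ (⟪θ v, v⟫).re := by
  obtain ⟨r, hr, h⟩ := hpos v hv
  rwa [h, Complex.ofReal_re]

theorem inner_map_eq_conj_inner_map (hθ : ∀ v, θ (θ v) = v) (u v : E) :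
    ⟪θ u, v⟫ = conj ⟪θ v, u⟫ := by
  rw [← θ.inner_map_map (θ u) v, hθ, inner_conj_symm]

theorem inner_map_add_add_self_add_inner_map_sub_sub_self (x y : E) :
    ⟪θ (x + y), x + y⟫ + ⟪θ (x - y), x - y⟫ = 2 * (⟪θ x, x⟫ + ⟪θ y, y⟫) := by
  simp only [map_add, map_sub, inner_add_left, inner_add_right, inner_sub_left, inner_sub_right]
  ring

theorem IsReflectionPositive.re_inner_map_add_self_le (hpos : IsReflectionPositive θ V)
    {x y : E} (hx : x ∈ V) (hy : y ∈ V) :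
    (⟪θ (x + y), x + y⟫).re ≤ 2 * (⟪θ x, x⟫).re + 2 * (⟪θ y, y⟫).re := by
  have h := congrArg Complex.re (inner_map_add_add_self_add_inner_map_sub_sub_self (θ := θ) x y)
  simp only [Complex.add_re, Complex.mul_re, Complex.re_ofNat, Complex.im_ofNat, zero_mul,
    sub_zero] at h
  linarith [hpos.re_inner_map_self_nonneg (V.sub_mem hx hy)]

@[reducible]
noncomputable def reflectionInnerCore (hθ : ∀ v, θ (θ v) = v) (hpos : IsReflectionPositive θ V) :
    PreInnerProductSpace.Core ℂ V where
  inner x y := ⟪θ x, y⟫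
  conj_inner_symm x y := (inner_map_eq_conj_inner_map hθ (x : E) y).symm
  re_inner_nonneg x := hpos.re_inner_map_self_nonneg x.2
  add_left x y z := by simp only [Submodule.coe_add, map_add, inner_add_left]
  smul_left x y r := by simp only [Submodule.coe_smul, map_smul, inner_smul_left]

theorem inner_map_eq_zero_of_inner_map_self_eq_zero (hθ : ∀ v, θ (θ v) = v)
    (hpos : IsReflectionPositive θ V) {x y : E} (hx : x ∈ V) (hy : y ∈ V)
    (h : ⟪θ y, y⟫ = 0) : ⟪θ x, y⟫ = 0 := by
  let := reflectionInnerCore hθ hpos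
  have hcs := InnerProductSpace.Core.inner_mul_inner_self_le (𝕜 := ℂ) (⟨x, hx⟩ : V) ⟨y, hy⟩
  change ‖⟪θ x, y⟫‖ * ‖⟪θ y, x⟫‖ ≤ (⟪θ x, x⟫).re * (⟪θ y, y⟫).re at hcs
  rw [h, Complex.zero_re, mul_zero, inner_map_eq_conj_inner_map hθ y x, RCLike.norm_conj,
    ← sq] at hcs
  exact norm_eq_zero.mp (pow_eq_zero_iff two_ne_zero |>.mp (le_antisymm hcs (sq_nonneg _)))

theorem exists_fixed_inner_map_sub_self_eq_zero [CompleteSpace E] (hV : IsClosed (V : Set E))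
    (hpos : IsReflectionPositive θ V) {D : Set E} (hD : ∀ v ∈ D, v ∈ V ∧ θ v = v)
    (hdense : ∀ w ∈ V, ∀ ε : ℝ, 0 < ε → ∃ d ∈ D, (⟪θ (w - d), w - d⟫).re < ε)
    {w : E} (hw : w ∈ V) : ∃ v ∈ V, θ v = v ∧ ⟪θ (w - v), w - v⟫ = 0 := by
  choose d hdD hd using fun n : ℕ => hdense w hw (1 / (n + 1)) Nat.one_div_pos_of_nat
  set f : ℕ → ℝ := fun n => (⟪θ (w - d n), w - d n⟫).re
  have hwd : ∀ n, w - d n ∈ V := fun n => V.sub_mem hw (hD _ (hdD n)).1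
  have hf : Tendsto f atTop (𝓝 0) :=
    squeeze_zero (fun n => hpos.re_inner_map_self_nonneg (hwd n)) (fun n => (hd n).le)
      tendsto_one_div_add_atTop_nhds_zero_nat
  have hdist : ∀ m n, dist (d m) (d n) ^ 2 ≤ 2 * f m + 2 * f n := by
    intro m n
    have hfix : θ (d m - d n) = d m - d n := by
      rw [map_sub, (hD _ (hdD m)).2, (hD _ (hdD n)).2]
    have hsum : d m - d n = (w - d n) + -(w - d m) := by abel
    calc dist (d m) (d n) ^ 2 = (⟪θ (d m - d n), d m - d n⟫).re := by
          rw [hfix, dist_eq_norm, ← inner_self_eq_norm_sq (𝕜 := ℂ)]; rfl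
      _ ≤ 2 * f n + 2 * (⟪θ (-(w - d m)), -(w - d m)⟫).re := by
          rw [hsum]; exact hpos.re_inner_map_add_self_le (hwd n) (V.neg_mem (hwd m))
      _ = 2 * f m + 2 * f n := by simp only [map_neg, inner_neg_neg, f]; ring
  obtain ⟨v, hv⟩ := cauchySeq_tendsto_of_complete <|
    cauchySeq_of_dist_sq_le_add (by simpa using hf.const_mul 2) hdist
  have hfixed : IsClosed {x : E | x ∈ V ∧ θ x = x} :=
    hV.inter (isClosed_eq θ.continuous continuous_id)
  obtain ⟨hvV, hvθ⟩ := hfixed.mem_of_tendsto hv (Eventually.of_forall fun n => hD _ (hdD n))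
  have hcont : Continuous fun x => ⟪θ (w - x), w - x⟫ := by fun_prop
  have hlim : Tendsto (fun n => ⟪θ (w - d n), w - d n⟫) atTop (𝓝 0) := by
    refine (Complex.ofReal_zero ▸ hf.ofReal).congr fun n => ?_
    exact (hpos.inner_map_self_eq_ofReal_re (hwd n)).symm
  exact ⟨v, hvV, hvθ, tendsto_nhds_unique ((hcont.tendsto v).comp hv) hlim⟩

theorem inner_map_self_eq_zero_iff_forall_fixed (hθ : ∀ v, θ (θ v) = v)
    (hpos : IsReflectionPositive θ V)
    (hfix : ∀ w ∈ V, ∃ v ∈ V, θ v = v ∧ ⟪θ (w - v), w - v⟫ = 0) {v : E} (hv : v ∈ V) :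
    ⟪θ v, v⟫ = 0 ↔ ∀ u ∈ V, θ u = u → ⟪u, v⟫ = 0 := by
  constructor
  · intro h u hu huθ
    rw [← huθ]
    exact inner_map_eq_zero_of_inner_map_self_eq_zero hθ hpos hu hv h
  · intro h
    obtain ⟨u, hu, huθ, hvu⟩ := hfix v hv
    have hrad : ⟪θ v, v - u⟫ = 0 :=
      inner_map_eq_zero_of_inner_map_self_eq_zero hθ hpos hv (V.sub_mem hv hu) hvu
    have hfixed : ⟪θ v, u⟫ = 0 := by
      rw [← huθ, θ.inner_map_map, ← inner_conj_symm, h u hu huθ, map_zero]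
    simpa [hrad, hfixed] using inner_add_right (𝕜 := ℂ) (θ v) (v - u) u

end ReflectionForm

/-- Let `(E, E₊, θ)` be a reflection positive Hilbert space and `D ⊆ E₀` a subspace whose
image `q(D)` is dense in `Ê` (expressed via the seminorm `‖q(v)‖² = re⟨θv,v⟩`).  Then
`q(E₀) = Ê` (every `q(w)`, `w ∈ E₊`, equals `q(v)` for some `v ∈ E₀`) and
`N = {v ∈ E₊ : ⟨θv,v⟩ = 0}` equals `E₊ ∩ E₀^⊥`. -/
theorem statement7
    {E : Type*} [NormedAddCommGroup E] [InnerProductSpace ℂ E] [CompleteSpace E]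
    (θ : E ≃ₗᵢ[ℂ] E) (hθinv : ∀ v : E, θ (θ v) = v)
    (Eplus : Submodule ℂ E) (hclosed : IsClosed (Eplus : Set E))
    (hpos : ∀ v ∈ Eplus, ∃ r : ℝ, 0 ≤ r ∧ ⟪θ v, v⟫ = (r : ℂ))
    (D : Submodule ℂ E) (hD : ∀ v ∈ D, v ∈ Eplus ∧ θ v = v)
    (hdense : ∀ w ∈ Eplus, ∀ ε : ℝ, 0 < ε → ∃ d ∈ D, (⟪θ (w - d), w - d⟫).re < ε) :
    (∀ w ∈ Eplus, ∃ v ∈ Eplus, θ v = v ∧ ⟪θ (w - v), w - v⟫ = (0 : ℂ)) ∧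
    {v : E | v ∈ Eplus ∧ ⟪θ v, v⟫ = (0 : ℂ)} =
      {v : E | v ∈ Eplus ∧ ∀ u : E, u ∈ Eplus → θ u = u → ⟪u, v⟫ = (0 : ℂ)} := by
  have hfix : ∀ w ∈ Eplus, ∃ v ∈ Eplus, θ v = v ∧ ⟪θ (w - v), w - v⟫ = 0 := fun w hw =>
    exists_fixed_inner_map_sub_self_eq_zero hclosed hpos hD hdense hw
  refine ⟨hfix, Set.ext fun v => and_congr_right fun hv => ?_⟩
  exact inner_map_self_eq_zero_iff_forall_fixed hθinv hpos hfix hv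
end

section
/- Let (E, E₊, θ) be a reflection positive Hilbert space with q(E₀) = Ê. Then N ⊕ E₀ ⊕ θ(N) is an orthogonal direct sum in E (in particular a closed subspace), where N = E₊ ∩ θ(E₊)^⊥ and E₀ = E₊ ∩ E^θ. -/
local notation "⟪" x ", " y "⟫" => @inner ℂ _ _ x y

/-- Sum of two orthogonal closed submodules of a complete inner product space is closed. -/
lemma aux_orth_sum_closed {E : Type*} [NormedAddCommGroup E] [InnerProductSpace ℂ E]
    [CompleteSpace E]
    (U V : Submodule ℂ E) (hU : IsClosed (U : Set E)) (hV : IsClosed (V : Set E))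
    (h : ∀ u ∈ U, ∀ v ∈ V, ⟪u, v⟫ = (0 : ℂ)) :
    IsClosed ((U ⊔ V : Submodule ℂ E) : Set E) := by
  haveI : CompleteSpace U := hU.completeSpace_coe
  haveI : CompleteSpace V := hV.completeSpace_coe
  set f : U × V → E := fun p => (p.1 : E) + (p.2 : E) with hf
  have hrange : Set.range f = ((U ⊔ V : Submodule ℂ E) : Set E) := by
    ext x
    constructor
    · rintro ⟨⟨u, v⟩, rfl⟩
      exact Submodule.mem_sup.mpr ⟨u, u.2, v, v.2, rfl⟩
    · intro hx
      obtain ⟨u, hu, v, hv, rfl⟩ := Submodule.mem_sup.mp hx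
      exact ⟨(⟨u, hu⟩, ⟨v, hv⟩), rfl⟩
  rw [← hrange]
  have key : ∀ p q : U × V,
      ‖f p - f q‖ * ‖f p - f q‖
        = ‖(p.1 : E) - q.1‖ * ‖(p.1 : E) - q.1‖ + ‖(p.2 : E) - q.2‖ * ‖(p.2 : E) - q.2‖ := by
    intro p q
    have : f p - f q = ((p.1 : E) - q.1) + ((p.2 : E) - q.2) := by
      simp only [hf]; abel
    rw [this]
    exact norm_add_sq_eq_norm_sq_add_norm_sq_of_inner_eq_zero _ _
      (h _ (sub_mem p.1.2 q.1.2) _ (sub_mem p.2.2 q.2.2))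
  have hanti : AntilipschitzWith 1 f := by
    apply AntilipschitzWith.of_le_mul_dist
    intro p q
    rw [NNReal.coe_one, one_mul, Prod.dist_eq]
    have h1 : dist p.1 q.1 ≤ dist (f p) (f q) := by
      rw [Subtype.dist_eq, dist_eq_norm, dist_eq_norm]
      have := key p q
      nlinarith [norm_nonneg ((p.2 : E) - q.2), norm_nonneg ((p.1 : E) - q.1),
        norm_nonneg (f p - f q)]
    have h2 : dist p.2 q.2 ≤ dist (f p) (f q) := by
      rw [Subtype.dist_eq, dist_eq_norm, dist_eq_norm]
      have := key p q
      nlinarith [norm_nonneg ((p.2 : E) - q.2), norm_nonneg ((p.1 : E) - q.1),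
        norm_nonneg (f p - f q)]
    exact max_le h1 h2
  have hcont : UniformContinuous f :=
    ((uniformContinuous_subtype_val.comp uniformContinuous_fst).add
      (uniformContinuous_subtype_val.comp uniformContinuous_snd))
  exact hanti.isClosed_range hcont

/-- Let `(E, E₊, θ)` be a reflection positive Hilbert space with `q(E₀) = Ê`.  Then
`N ⊕ E₀ ⊕ θ(N)` is an orthogonal direct sum in `E` (in particular a closed subspace),
where `N = E₊ ∩ θ(E₊)^⊥` and `E₀ = E₊ ∩ E^θ`. -/
theorem statement8
    {E : Type*} [NormedAddCommGroup E] [InnerProductSpace ℂ E] [CompleteSpace E]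
    (θ : E ≃ₗᵢ[ℂ] E) (hθinv : ∀ v : E, θ (θ v) = v)
    (Eplus : Submodule ℂ E) (hclosed : IsClosed (Eplus : Set E))
    (hpos : ∀ v ∈ Eplus, ∃ r : ℝ, 0 ≤ r ∧ ⟪θ v, v⟫ = (r : ℂ))
    (hq : ∀ w ∈ Eplus, ∃ v ∈ Eplus, θ v = v ∧ ⟪θ (w - v), w - v⟫ = (0 : ℂ)) :
    let N : Set E := {v | v ∈ Eplus ∧ ∀ w ∈ Eplus, ⟪θ w, v⟫ = (0 : ℂ)}
    let E0 : Set E := {v | v ∈ Eplus ∧ θ v = v}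
    (∀ n ∈ N, ∀ e ∈ E0, ⟪n, e⟫ = (0 : ℂ)) ∧
    (∀ n ∈ N, ∀ m ∈ N, ⟪n, θ m⟫ = (0 : ℂ)) ∧
    (∀ e ∈ E0, ∀ m ∈ N, ⟪e, θ m⟫ = (0 : ℂ)) ∧
    IsClosed {x : E | ∃ n ∈ N, ∃ e ∈ E0, ∃ m ∈ N, x = n + e + θ m} := by
  intro N E0
  have part1 : ∀ n ∈ N, ∀ e ∈ E0, ⟪n, e⟫ = (0 : ℂ) := by
    intro n hn e he
    have h1 : ⟪θ e, n⟫ = (0 : ℂ) := hn.2 e he.1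
    rw [he.2] at h1
    exact inner_eq_zero_symm.mp h1
  have part2 : ∀ n ∈ N, ∀ m ∈ N, ⟪n, θ m⟫ = (0 : ℂ) := by
    intro n hn m hm
    have h1 : ⟪θ n, m⟫ = (0 : ℂ) := hm.2 n hn.1
    calc ⟪n, θ m⟫ = ⟪θ n, θ (θ m)⟫ := (θ.inner_map_map n (θ m)).symm
    _ = ⟪θ n, m⟫ := by rw [hθinv]
    _ = 0 := h1
  have part3 : ∀ e ∈ E0, ∀ m ∈ N, ⟪e, θ m⟫ = (0 : ℂ) := by
    intro e he m hm
    calc ⟪e, θ m⟫ = ⟪θ e, θ (θ m)⟫ := (θ.inner_map_map e (θ m)).symm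
    _ = ⟪θ e, m⟫ := by rw [hθinv]
    _ = 0 := hm.2 e he.1
  refine ⟨part1, part2, part3, ?_⟩
  -- define the submodules
  set Nsub : Submodule ℂ E :=
    Eplus ⊓ (Eplus.map (θ.toLinearEquiv : E →ₗ[ℂ] E))ᗮ with hNsub
  have memN : ∀ v : E, v ∈ Nsub ↔ v ∈ N := by
    intro v
    rw [hNsub, Submodule.mem_inf, Submodule.mem_orthogonal]
    constructor
    · rintro ⟨h1, h2⟩
      exact ⟨h1, fun w hw => h2 (θ w) (Submodule.mem_map.mpr ⟨w, hw, rfl⟩)⟩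
    · rintro ⟨h1, h2⟩
      refine ⟨h1, fun u hu => ?_⟩
      obtain ⟨w, hw, rfl⟩ := Submodule.mem_map.mp hu
      exact h2 w hw
  set E0sub : Submodule ℂ E :=
    Eplus ⊓ LinearMap.eqLocus (θ.toLinearEquiv : E →ₗ[ℂ] E) LinearMap.id with hE0sub
  have memE0 : ∀ v : E, v ∈ E0sub ↔ v ∈ E0 := by
    intro v
    rw [hE0sub, Submodule.mem_inf, LinearMap.mem_eqLocus]
    rfl
  set θNsub : Submodule ℂ E := Nsub.map (θ.toLinearEquiv : E →ₗ[ℂ] E) with hθNsub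
  have memθN : ∀ v : E, v ∈ θNsub ↔ ∃ m ∈ N, θ m = v := by
    intro v
    rw [hθNsub, Submodule.mem_map]
    constructor
    · rintro ⟨m, hm, rfl⟩; exact ⟨m, (memN m).mp hm, rfl⟩
    · rintro ⟨m, hm, rfl⟩; exact ⟨m, (memN m).mpr hm, rfl⟩
  -- closedness of each piece
  have hNclosed : IsClosed (Nsub : Set E) := by
    rw [hNsub]
    have : ((Eplus ⊓ (Eplus.map (θ.toLinearEquiv : E →ₗ[ℂ] E))ᗮ : Submodule ℂ E) : Set E)
        = (Eplus : Set E) ∩ ((Eplus.map (θ.toLinearEquiv : E →ₗ[ℂ] E))ᗮ : Set E) := rfl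
    rw [this]
    exact hclosed.inter (Submodule.isClosed_orthogonal _)
  have hE0closed : IsClosed (E0sub : Set E) := by
    have heq : (E0sub : Set E) = (Eplus : Set E) ∩ {v : E | θ v = v} := by
      ext v
      simp only [Set.mem_inter_iff, Set.mem_setOf_eq, SetLike.mem_coe, memE0 v]
      rfl
    rw [heq]
    exact hclosed.inter (isClosed_eq θ.continuous continuous_id)
  have hθNclosed : IsClosed (θNsub : Set E) := by
    have heq : (θNsub : Set E) = θ.toHomeomorph '' (Nsub : Set E) := by
      ext v
      simp only [Set.mem_image, SetLike.mem_coe, hθNsub, Submodule.mem_map]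
      rfl
    rw [heq]
    exact (θ.toHomeomorph.isClosedEmbedding.isClosed_iff_image_isClosed.mp hNclosed)
  -- orthogonal sums
  have hW : IsClosed ((E0sub ⊔ θNsub : Submodule ℂ E) : Set E) := by
    apply aux_orth_sum_closed _ _ hE0closed hθNclosed
    intro e he v hv
    obtain ⟨m, hm, rfl⟩ := (memθN v).mp hv
    exact part3 e ((memE0 e).mp he) m hm
  have hK : IsClosed ((Nsub ⊔ (E0sub ⊔ θNsub) : Submodule ℂ E) : Set E) := by
    apply aux_orth_sum_closed _ _ hNclosed hW
    intro n hn w hw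
    obtain ⟨e, he, v, hv, rfl⟩ := Submodule.mem_sup.mp hw
    obtain ⟨m, hm, rfl⟩ := (memθN v).mp hv
    rw [inner_add_right]
    rw [part1 n ((memN n).mp hn) e ((memE0 e).mp he),
      part2 n ((memN n).mp hn) m hm, add_zero]
  -- identify the set
  have hset : {x : E | ∃ n ∈ N, ∃ e ∈ E0, ∃ m ∈ N, x = n + e + θ m}
      = ((Nsub ⊔ (E0sub ⊔ θNsub) : Submodule ℂ E) : Set E) := by
    ext x
    simp only [Set.mem_setOf_eq, SetLike.mem_coe]
    constructor
    · rintro ⟨n, hn, e, he, m, hm, rfl⟩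
      refine Submodule.mem_sup.mpr ⟨n, (memN n).mpr hn, e + θ m,
        Submodule.mem_sup.mpr ⟨e, (memE0 e).mpr he, θ m, (memθN _).mpr ⟨m, hm, rfl⟩, rfl⟩, ?_⟩
      rw [add_assoc]
    · intro hx
      obtain ⟨n, hn, w, hw, rfl⟩ := Submodule.mem_sup.mp hx
      obtain ⟨e, he, v, hv, rfl⟩ := Submodule.mem_sup.mp hw
      obtain ⟨m, hm, rfl⟩ := (memθN v).mp hv
      exact ⟨n, (memN n).mp hn, e, (memE0 e).mp he, m, hm, (add_assoc n e (θ m)).symm⟩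
  rw [hset]
  exact hK
end

section
/- Let (S,*) be a unital involutive semigroup and φ : S → B(F) a positive definite function with φ(1) = 1_F, with associated GNS representation (π_φ, H_φ) on the reproducing kernel Hilbert space H_φ ⊆ F^S given by (π_φ(s)f)(t) = f(ts). Then the isometric inclusion ι : F → H_φ, ι(v)(s) = φ(s)v, is surjective if and only if φ is multiplicative, i.e., φ(st) = φ(s)φ(t) for all s,t ∈ S. -/
local notation "⟪" x ", " y "⟫" => inner ℂ x y

/-! When `ι` is onto, the defining identity `⟪φ(s)v, w⟫ = ⟪π(s)ιv, ιw⟫` forces `ι ∘ φ(s) = π(s) ∘ ι`,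
and multiplicativity of `φ` is inherited from that of `π`. Conversely, if `φ` is multiplicative,
`π(s)ιv` and `ιφ(s)v` have the same inner products `⟪φ(t* s)v, w⟫` with every generator `π(t)ιw`,
so they agree; then `range ι` is a closed subspace containing the total set of generators. -/

open Submodule

section InnerProduct

variable {𝕜 E F : Type*} [RCLike 𝕜] [NormedAddCommGroup E] [InnerProductSpace 𝕜 E]
  [NormedAddCommGroup F] [InnerProductSpace 𝕜 F]

theorem eq_of_inner_left_of_dense_span {T : Set E} (hT : Dense (span 𝕜 T : Set E)) {x y : E}
    (h : ∀ v ∈ T, inner 𝕜 x v = inner 𝕜 y v) : x = y :=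
  hT.eq_of_inner_left 𝕜 fun _ hv ↦ span_induction h (by simp)
    (fun _ _ _ _ hu hw ↦ by simp only [inner_add_right, hu, hw])
    (fun _ _ _ hu ↦ by simp only [inner_smul_right, hu]) hv

theorem LinearIsometry.surjective_of_subset_range_of_dense_span [CompleteSpace F]
    (ι : F →ₗᵢ[𝕜] E) {T : Set E} (hT : Dense (span 𝕜 T : Set E)) (hTι : T ⊆ Set.range ι) :
    Function.Surjective ι := by
  have hspan : (span 𝕜 T : Set E) ⊆ Set.range ι :=
    span_le (p := LinearMap.range ι.toLinearMap) |>.2 hTι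
  have hclosed : IsClosed (Set.range ι) := ι.isometry.isClosedEmbedding.isClosed_range
  intro y
  exact hclosed.closure_subset_iff.2 hspan (hT.closure_eq ▸ Set.mem_univ y)

theorem LinearIsometry.apply_eq_of_surjective_of_inner_eq (ι : F →ₗᵢ[𝕜] E)
    (hι : Function.Surjective ι) {x : F} {y : E} (h : ∀ w, inner 𝕜 x w = inner 𝕜 y (ι w)) :
    ι x = y := by
  obtain ⟨u, rfl⟩ := hι y
  congr 1
  exact ext_inner_right 𝕜 fun w ↦ by rw [h, ι.inner_map_map]

end InnerProduct

section Dilation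

variable {S : Type*} [Monoid S]
  {F H : Type*} [NormedAddCommGroup F] [InnerProductSpace ℂ F]
  [NormedAddCommGroup H] [InnerProductSpace ℂ H]
  {ι : F →ₗᵢ[ℂ] H} {π : S → (H →L[ℂ] H)} {φ : S → (F →L[ℂ] F)}

theorem map_mul_of_intertwines (hπm : ∀ s t : S, π (s * t) = (π s).comp (π t))
    (hint : ∀ s v, ι (φ s v) = π s (ι v)) (s t : S) : φ (s * t) = (φ s).comp (φ t) := by
  ext v
  apply ι.injective
  simp only [ContinuousLinearMap.comp_apply, hint, hπm]

theorem intertwines_of_map_mul [StarMul S] (hπm : ∀ s t : S, π (s * t) = (π s).comp (π t))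
    (hπstar : ∀ (s : S) (v w : H), ⟪π (star s) v, w⟫ = ⟪v, π s w⟫)
    (hcyc : Dense (span ℂ (⋃ s : S, π s '' Set.range ι) : Set H))
    (hφ : ∀ (s : S) (v w : F), ⟪φ s v, w⟫ = ⟪π s (ι v), ι w⟫)
    (hmul : ∀ s t : S, φ (s * t) = (φ s).comp (φ t)) (s : S) (v : F) :
    ι (φ s v) = π s (ι v) := by
  refine eq_of_inner_left_of_dense_span hcyc ?_
  rintro _ ⟨_, ⟨t, rfl⟩, _, ⟨w, rfl⟩, rfl⟩
  calc ⟪ι (φ s v), π t (ι w)⟫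
      = ⟪φ (star t * s) v, w⟫ := by
        rw [← hπstar, ← hφ, hmul, ContinuousLinearMap.comp_apply]
    _ = ⟪π s (ι v), π t (ι w)⟫ := by
        rw [← hπstar, hφ, hπm, ContinuousLinearMap.comp_apply]

end Dilation

theorem statement9_general
    {S : Type*} [Monoid S] [StarMul S]
    {F H : Type*} [NormedAddCommGroup F] [InnerProductSpace ℂ F] [CompleteSpace F]
    [NormedAddCommGroup H] [InnerProductSpace ℂ H]
    (ι : F →ₗᵢ[ℂ] H)
    (π : S → (H →L[ℂ] H))
    (hπm : ∀ s t : S, π (s * t) = (π s).comp (π t))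
    (hπstar : ∀ (s : S) (v w : H), (⟪π (star s) v, w⟫ : ℂ) = ⟪v, π s w⟫)
    (hcyc : Dense (Submodule.span ℂ (⋃ s : S, π s '' Set.range ι) : Set H))
    (φ : S → (F →L[ℂ] F))
    (hφ : ∀ (s : S) (v w : F), (⟪φ s v, w⟫ : ℂ) = ⟪π s (ι v), ι w⟫) :
    Function.Surjective ι ↔ ∀ s t : S, φ (s * t) = (φ s).comp (φ t) := by
  constructor
  · intro hsurj
    exact map_mul_of_intertwines hπm fun s v ↦
      ι.apply_eq_of_surjective_of_inner_eq hsurj (hφ s v)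
  · intro hmul
    refine ι.surjective_of_subset_range_of_dense_span hcyc ?_
    rintro _ ⟨_, ⟨t, rfl⟩, _, ⟨w, rfl⟩, rfl⟩
    exact ⟨φ t w, intertwines_of_map_mul hπm hπstar hcyc hφ hmul t w⟩

/-- GNS-type lemma: let `(S,*)` be a unital involutive semigroup and `φ : S → B(F)` a
positive definite function with `φ(1) = 1`, realized by a `*`-representation `(π, H)` with
an isometric inclusion `ι : F → H` whose `π(S)`-translates are total in `H` and
`⟨φ(s)v, w⟩ = ⟨π(s)ιv, ιw⟩`.  Then the inclusion `ι : F → H_φ` is surjective if and only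
if `φ` is multiplicative, i.e. `φ(st) = φ(s)φ(t)` for all `s, t ∈ S`. -/
theorem statement9
    {S : Type*} [Monoid S] [StarMul S]
    {F H : Type*} [NormedAddCommGroup F] [InnerProductSpace ℂ F] [CompleteSpace F]
    [NormedAddCommGroup H] [InnerProductSpace ℂ H] [CompleteSpace H]
    (ι : F →ₗᵢ[ℂ] H)
    (π : S → (H →L[ℂ] H))
    (hπ1 : π 1 = ContinuousLinearMap.id ℂ H)
    (hπm : ∀ s t : S, π (s * t) = (π s).comp (π t))
    (hπstar : ∀ (s : S) (v w : H), (⟪π (star s) v, w⟫ : ℂ) = ⟪v, π s w⟫)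
    (hcyc : Dense (Submodule.span ℂ (⋃ s : S, π s '' Set.range ι) : Set H))
    (φ : S → (F →L[ℂ] F))
    (hφ1 : φ 1 = ContinuousLinearMap.id ℂ F)
    (hφ : ∀ (s : S) (v w : F), (⟪φ s v, w⟫ : ℂ) = ⟪π s (ι v), ι w⟫) :
    Function.Surjective ι ↔ ∀ s t : S, φ (s * t) = (φ s).comp (φ t) :=
  statement9_general ι π hπm hπstar hcyc φ hφ
end

section
/- Equivalently: let π : S → B(H) be a *-representation of a unital involutive semigroup on a Hilbert space H, F ⊆ H a closed subspace such that π(S)F is total in H, and P : H → F the orthogonal projection. Then the function φ(s) := Pπ(s)P* is multiplicative if and only if F = H. -/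
local notation "⟪" x ", " y "⟫" => @inner ℂ _ _ x y

/-!
If `φ` is multiplicative then, for `v ∈ F` and `x = π t v`, `Q = φ t v`,
`‖x‖² = ⟨φ(t* t) v, v⟩ = ⟨φ(t*) Q, v⟩ = ⟨Q, x⟩`; since `x - Q ⟂ F ∋ Q` this forces `x = Q`.
So `F` is `π(S)`-invariant, hence contains the span of `π(S)F`, which is dense; `F` being
closed, `F = H`.
-/

open scoped InnerProductSpace

section

variable {𝕜 S H : Type*} [RCLike 𝕜] [NormedAddCommGroup H] [InnerProductSpace 𝕜 H]

/-- `φ s` is the compression `P π(s) P*` of `π s` to `F`. -/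
def IsCompression (π : S → H →L[𝕜] H) (F : Submodule 𝕜 H) (φ : S → F →L[𝕜] F) : Prop :=
  ∀ (s : S) (v w : F), ⟪(φ s v : H), (w : H)⟫_𝕜 = ⟪π s v, w⟫_𝕜

theorem eq_of_inner_sub_eq_zero_of_inner_self_eq {x y : H} (hxy : ⟪x - y, y⟫_𝕜 = 0)
    (hx : ⟪x, x⟫_𝕜 = ⟪y, x⟫_𝕜) : x = y := by
  have : ⟪x - y, x - y⟫_𝕜 = 0 := by
    rw [inner_sub_right, hxy, inner_sub_left, hx]
    ring
  exact sub_eq_zero.mp (inner_self_eq_zero.mp this)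

namespace IsCompression

variable {π : S → H →L[𝕜] H} {F : Submodule 𝕜 H} {φ : S → F →L[𝕜] F}

theorem inner_sub_eq_zero (hφ : IsCompression π F φ) (s : S) (v w : F) :
    ⟪π s v - φ s v, (w : H)⟫_𝕜 = 0 := by
  rw [inner_sub_left, hφ, sub_self]

theorem coe_apply_of_mem (hφ : IsCompression π F φ) {s : S} {v : F} (hv : π s v ∈ F) :
    (φ s v : H) = π s v := by
  have h := hφ.inner_sub_eq_zero s v ⟨_, sub_mem hv (φ s v).2⟩
  exact (sub_eq_zero.mp (inner_self_eq_zero.mp h)).symm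

theorem coe_apply_of_map_mul_star_self [Monoid S] [StarMul S] (hφ : IsCompression π F φ)
    (hπm : ∀ s t : S, π (s * t) = (π s).comp (π t))
    (hπstar : ∀ (s : S) (v w : H), ⟪π (star s) v, w⟫_𝕜 = ⟪v, π s w⟫_𝕜)
    {t : S} (hmul : φ (star t * t) = (φ (star t)).comp (φ t)) (v : F) :
    (φ t v : H) = π t v := by
  refine (eq_of_inner_sub_eq_zero_of_inner_self_eq (hφ.inner_sub_eq_zero t v (φ t v)) ?_).symm
  calc ⟪π t v, π t v⟫_𝕜 = ⟪π (star t * t) v, v⟫_𝕜 := by rw [hπm, ← hπstar]; rfl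
    _ = ⟪(φ (star t) (φ t v) : H), v⟫_𝕜 := by rw [← hφ, hmul]; rfl
    _ = ⟪(φ t v : H), π t v⟫_𝕜 := by rw [hφ, hπstar]

end IsCompression

theorem Submodule.eq_top_of_dense_span_iUnion_image {π : S → H →L[𝕜] H}
    {F : Submodule 𝕜 H} (hFclosed : IsClosed (F : Set H))
    (hdense : Dense (Submodule.span 𝕜 (⋃ s : S, π s '' (F : Set H)) : Set H))
    (hinv : ∀ (s : S) (v : F), π s v ∈ F) : F = ⊤ := by
  have hspan : Submodule.span 𝕜 (⋃ s : S, π s '' (F : Set H)) ≤ F := by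
    rw [Submodule.span_le, Set.iUnion_subset_iff]
    rintro s _ ⟨v, hv, rfl⟩
    exact hinv s ⟨v, hv⟩
  rw [← top_le_iff, ← Submodule.dense_iff_topologicalClosure_eq_top.mp hdense]
  exact Submodule.topologicalClosure_minimal _ hspan hFclosed

end

theorem statement10_general
    {S : Type*} [Monoid S] [StarMul S]
    {H : Type*} [NormedAddCommGroup H] [InnerProductSpace ℂ H]
    (π : S → (H →L[ℂ] H))
    (hπm : ∀ s t : S, π (s * t) = (π s).comp (π t))
    (hπstar : ∀ (s : S) (v w : H), ⟪π (star s) v, w⟫ = ⟪v, π s w⟫)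
    (F : Submodule ℂ H) (hFclosed : IsClosed (F : Set H))
    (hcyc : Dense (Submodule.span ℂ (⋃ s : S, π s '' (F : Set H)) : Set H))
    (φ : S → (F →L[ℂ] F))
    (hφ : ∀ (s : S) (v w : F), ⟪((φ s v : F) : H), (w : H)⟫ = ⟪π s (v : H), (w : H)⟫) :
    (∀ s t : S, φ (s * t) = (φ s).comp (φ t)) ↔ F = ⊤ := by
  have hφ' : IsCompression π F φ := hφ
  constructor
  · intro hmul
    refine Submodule.eq_top_of_dense_span_iUnion_image hFclosed hcyc fun t v => ?_
    rw [← hφ'.coe_apply_of_map_mul_star_self hπm hπstar (hmul (star t) t)]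
    exact (φ t v).2
  · rintro rfl s t
    have hcoe (r : S) (u : (⊤ : Submodule ℂ H)) : (φ r u : H) = π r u :=
      hφ'.coe_apply_of_mem trivial
    ext v
    simp only [ContinuousLinearMap.comp_apply, hcoe, hπm]

/-- Let `π : S → B(H)` be a `*`-representation of a unital involutive semigroup on a
Hilbert space `H`, `F ⊆ H` a closed subspace with `π(S)F` total in `H`, and
`φ(s) = P π(s) P*` for the orthogonal projection `P : H → F` (characterized here by
`⟨φ(s)v, w⟩ = ⟨π(s)v, w⟩` for `v, w ∈ F`).  Then `φ` is multiplicative iff `F = H`. -/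
theorem statement10
    {S : Type*} [Monoid S] [StarMul S]
    {H : Type*} [NormedAddCommGroup H] [InnerProductSpace ℂ H] [CompleteSpace H]
    (π : S → (H →L[ℂ] H))
    (hπ1 : π 1 = ContinuousLinearMap.id ℂ H)
    (hπm : ∀ s t : S, π (s * t) = (π s).comp (π t))
    (hπstar : ∀ (s : S) (v w : H), ⟪π (star s) v, w⟫ = ⟪v, π s w⟫)
    (F : Submodule ℂ H) (hFclosed : IsClosed (F : Set H))
    (hcyc : Dense (Submodule.span ℂ (⋃ s : S, π s '' (F : Set H)) : Set H))
    (φ : S → (F →L[ℂ] F))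
    (hφ : ∀ (s : S) (v w : F), ⟪((φ s v : F) : H), (w : H)⟫ = ⟪π s (v : H), (w : H)⟫) :
    (∀ s t : S, φ (s * t) = (φ s).comp (φ t)) ↔ F = ⊤ :=
  statement10_general π hπm hπstar F hFclosed hcyc φ hφ
end
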